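/- arXiv:1905.04406 — 3 statements merged into one kernel-verified Lean document; each statement's English description precedes it below -/
import Mathlib

section
/- Let K be a totally real number field of degree f, Γ(I) ⊂ SL(n, O_K) the set of matrices congruent to the identity mod a prime ideal I, and suppose every A ∈ Γ(I) satisfies |tr(A^σ)| ≤ n for all non-identity embeddings σ. Then for A ∈ Γ(I) with tr A ≠ n, one has |tr A| ≥ N(I)/(2n)^{f-1} - n. -/
/-!
Put `c = tr A - n`. Reducing `A ≡ 1` along the diagonal gives `c ∈ I`, and `c ≠ 0`, so `N(I)`
divides the nonzero integer `N_{K/ℚ}(c) = ∏_σ σ(c)`. At every real embedding `σ ≠ σ₀` we have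
`|σ(c)| ≤ |tr A^σ| + n ≤ 2n`, hence `N(I) ≤ |σ₀(c)| (2n)^(f-1)`, and `|σ₀(c)| ≤ |σ₀(tr A)| + n`.
-/

open NumberField

theorem Ideal.absNorm_le_abs_norm_of_mem {S : Type*} [CommRing S] [IsDedekindDomain S]
    [Module.Free ℤ S] [Module.Finite ℤ S] {I : Ideal S} {x : S} (hx : x ∈ I) (hx0 : x ≠ 0) :
    (Ideal.absNorm I : ℤ) ≤ |Algebra.norm ℤ x| :=
  Int.le_of_dvd (abs_pos.mpr (Algebra.norm_ne_zero_iff.mpr hx0))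
    ((dvd_abs _ _).mpr (Ideal.absNorm_dvd_norm_of_mem hx))

theorem Matrix.trace_sub_card_mem {m R : Type*} [Fintype m] [DecidableEq m] [CommRing R]
    {I : Ideal R} {A : Matrix m m R} (h : ∀ i, A i i - 1 ∈ I) :
    A.trace - Fintype.card m ∈ I := by
  rw [← Matrix.trace_one, ← Matrix.trace_sub]
  exact I.sum_mem fun i _ => by simpa using h i

namespace NumberField

variable {K : Type*} [Field K]

theorem isTotallyReal_of_forall_im_eq_zero (h : ∀ φ : K →+* ℂ, ∀ x : K, (φ x).im = 0) :
    IsTotallyReal K :=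
  ⟨fun _ => InfinitePlace.isReal_iff.mpr <| RingHom.ext fun x =>
    Complex.conj_eq_iff_im.mpr (h _ x)⟩

namespace IsTotallyReal

variable [IsTotallyReal K]

def realEmbeddingEquiv : (K →+* ℝ) ≃ (K →+* ℂ) where
  toFun σ := Complex.ofRealHom.comp σ
  invFun φ := (complexEmbedding_isReal φ).embedding
  left_inv σ := by ext x; simp [ComplexEmbedding.IsReal.embedding]
  right_inv φ := by ext x; simp

variable [NumberField K]

theorem card_realEmbedding : Fintype.card (K →+* ℝ) = Module.finrank ℚ K := by
  rw [Fintype.card_congr realEmbeddingEquiv, Embeddings.card]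

theorem prod_abs_realEmbedding_eq_abs_norm (x : K) :
    ∏ σ : K →+* ℝ, |σ x| = |(Algebra.norm ℚ x : ℝ)| := by
  have h := congrArg (‖·‖) (Algebra.norm_eq_prod_embeddings ℚ ℂ x)
  rw [norm_prod, eq_ratCast, ← Complex.ofReal_ratCast, Complex.norm_real, Real.norm_eq_abs] at h
  rw [h]
  exact Fintype.prod_equiv (realEmbeddingEquiv.trans (RingHom.equivRatAlgHom K ℂ)) _ _
    fun σ => by simp [realEmbeddingEquiv]

theorem abs_norm_le_abs_mul_pow_of_abs_le (σ₀ : K →+* ℝ) {x : K} {B : ℝ}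
    (hB : ∀ σ : K →+* ℝ, σ ≠ σ₀ → |σ x| ≤ B) :
    |(Algebra.norm ℚ x : ℝ)| ≤ |σ₀ x| * B ^ (Module.finrank ℚ K - 1) := by
  classical
  rw [← prod_abs_realEmbedding_eq_abs_norm, ← Finset.mul_prod_erase _ _ (Finset.mem_univ σ₀)]
  gcongr
  calc ∏ σ ∈ Finset.univ.erase σ₀, |σ x|
      ≤ ∏ _σ ∈ Finset.univ.erase σ₀, B :=
        Finset.prod_le_prod (fun _ _ => abs_nonneg _) fun σ hσ => hB σ (Finset.ne_of_mem_erase hσ)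
    _ = B ^ (Module.finrank ℚ K - 1) := by
        rw [Finset.prod_const, Finset.card_erase_of_mem (Finset.mem_univ σ₀), Finset.card_univ,
          card_realEmbedding]

theorem absNorm_div_pow_le_abs_of_mem (σ₀ : K →+* ℝ) {I : Ideal (𝓞 K)} {x : 𝓞 K} (hx : x ∈ I)
    (hx0 : x ≠ 0) {B : ℝ} (hB0 : 0 < B) (hB : ∀ σ : K →+* ℝ, σ ≠ σ₀ → |σ x| ≤ B) :
    (Ideal.absNorm I : ℝ) / B ^ (Module.finrank ℚ K - 1) ≤ |σ₀ x| := by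
  rw [div_le_iff₀ (pow_pos hB0 _)]
  calc (Ideal.absNorm I : ℝ) ≤ |(Algebra.norm ℤ x : ℝ)| := by
        exact_mod_cast Ideal.absNorm_le_abs_norm_of_mem hx hx0
    _ = |(Algebra.norm ℚ (x : K) : ℝ)| := by rw [← Algebra.coe_norm_int, Rat.cast_intCast]
    _ ≤ |σ₀ x| * B ^ (Module.finrank ℚ K - 1) := abs_norm_le_abs_mul_pow_of_abs_le σ₀ hB

end IsTotallyReal

end NumberField

theorem trace_lower_bound_congruence_general (K : Type) [Field K] [NumberField K]
    -- K is totally real: every complex embedding takes real values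
    (htot : ∀ φ : K →+* ℂ, ∀ x : K, (φ x).im = 0)
    (σ₀ : K →+* ℝ)
    (I : Ideal (𝓞 K))
    (n : ℕ)
    (A : Matrix (Fin n) (Fin n) (𝓞 K))
    -- A ≡ Id mod I
    (hcong : ∀ i j, A i j - (1 : Matrix (Fin n) (Fin n) (𝓞 K)) i j ∈ I)
    -- compactness bound on Galois conjugates
    (hcpt : ∀ σ : K →+* ℝ, σ ≠ σ₀ →
      |(A.map (fun x => σ (algebraMap (𝓞 K) K x))).trace| ≤ n)
    (htr : A.trace ≠ (n : 𝓞 K)) :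
    (Ideal.absNorm I : ℝ) / (2 * n : ℝ) ^ (Module.finrank ℚ K - 1) - n ≤
      |σ₀ (algebraMap (𝓞 K) K A.trace)| := by
  have := isTotallyReal_of_forall_im_eq_zero htot
  have hn : n ≠ 0 := by rintro rfl; exact htr (by simp [Matrix.trace])
  have hconj (σ : K →+* ℝ) :
      σ ((A.trace - n : 𝓞 K) : K) = σ (algebraMap (𝓞 K) K A.trace) - n := by simp
  have hbound (σ : K →+* ℝ) (hσ : σ ≠ σ₀) : |σ ((A.trace - n : 𝓞 K) : K)| ≤ 2 * n := by
    have htrace : (A.map fun x => σ (algebraMap (𝓞 K) K x)).trace =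
        σ (algebraMap (𝓞 K) K A.trace) :=
      (AddMonoidHom.map_trace (σ.comp (algebraMap (𝓞 K) K)) A).symm
    have h := hcpt σ hσ
    rw [htrace] at h
    rw [hconj]
    calc _ ≤ |σ (algebraMap (𝓞 K) K A.trace)| + |(n : ℝ)| := abs_sub _ _
      _ ≤ 2 * n := by rw [Nat.abs_cast]; linarith
  have hmem : A.trace - n ∈ I := by
    have h := Matrix.trace_sub_card_mem (I := I) (A := A) fun i => by simpa using hcong i i
    rwa [Fintype.card_fin] at h
  have key := IsTotallyReal.absNorm_div_pow_le_abs_of_mem σ₀ hmem (sub_ne_zero.mpr htr)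
    (by positivity) hbound
  rw [hconj] at key
  have hσ₀ := abs_sub (σ₀ (algebraMap (𝓞 K) K A.trace)) (n : ℝ)
  rw [Nat.abs_cast] at hσ₀
  linarith

/-- Let `K` be a totally real number field of degree `f`, `I ⊂ 𝓞 K` a
nonzero prime ideal, and `A ∈ SL(n, 𝓞 K)` congruent to the identity mod `I` (i.e.
`A ∈ Γ(I)`), with `|tr(A^σ)| ≤ n` for all real embeddings `σ ≠ σ₀`. If `tr A ≠ n`,
then `|tr A| ≥ N(I)/(2n)^(f-1) - n`. -/
theorem trace_lower_bound_congruence (K : Type) [Field K] [NumberField K]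
    -- K is totally real: every complex embedding takes real values
    (htot : ∀ φ : K →+* ℂ, ∀ x : K, (φ x).im = 0)
    (σ₀ : K →+* ℝ)
    (I : Ideal (𝓞 K)) (hI : I.IsPrime) (hIbot : I ≠ ⊥)
    (n : ℕ)
    (A : Matrix (Fin n) (Fin n) (𝓞 K)) (hdet : A.det = 1)
    -- A ≡ Id mod I
    (hcong : ∀ i j, A i j - (1 : Matrix (Fin n) (Fin n) (𝓞 K)) i j ∈ I)
    -- compactness bound on Galois conjugates
    (hcpt : ∀ σ : K →+* ℝ, σ ≠ σ₀ →
      |(A.map (fun x => σ (algebraMap (𝓞 K) K x))).trace| ≤ n)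
    (htr : A.trace ≠ (n : 𝓞 K)) :
    (Ideal.absNorm I : ℝ) / (2 * n : ℝ) ^ (Module.finrank ℚ K - 1) - n ≤
      |σ₀ (algebraMap (𝓞 K) K A.trace)| :=
  trace_lower_bound_congruence_general K htot σ₀ I n A hcong hcpt htr
end

section
/- The set of complex Salem numbers of degree at most d over ℚ, for any fixed d, attains a least element in absolute value strictly greater than 1 (equivalently, there is ε > 0 with |λ| ≥ 1 + ε for all such λ). -/
open Polynomial

/-! A complex Salem number `λ` with `‖λ‖ ≤ 2` is an algebraic integer whose conjugates all
have norm at most `‖λ‖ ≤ 2`. In bounded degree its minimal polynomial therefore has bounded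
integer coefficients, so there are only finitely many such `λ`, and the least `‖λ‖` among them
exceeds `1`. -/

/-- A complex Salem number: `λ` with `|λ| > 1` which is a root of a monic integer
polynomial all of whose roots other than `λ, conj λ, λ⁻¹, conj(λ)⁻¹` lie on the
unit circle. -/
def IsComplexSalem (lam : ℂ) : Prop :=
  1 < ‖lam‖ ∧
    ∃ p : Polynomial ℤ, p.Monic ∧ Polynomial.aeval lam p = 0 ∧
      ∀ z : ℂ, Polynomial.aeval z p = 0 →
        z = lam ∨ z = starRingEnd ℂ lam ∨ z = lam⁻¹ ∨ z = (starRingEnd ℂ lam)⁻¹ ∨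
          ‖z‖ = 1

theorem finite_setOf_isIntegral_natDegree_minpoly_le_of_aroots_norm_le (d : ℕ) (B : ℝ) :
    {x : ℂ | IsIntegral ℤ x ∧ (minpoly ℚ x).natDegree ≤ d ∧
      ∀ z ∈ (minpoly ℚ x).aroots ℂ, ‖z‖ ≤ B}.Finite := by
  classical
  let C := Nat.ceil (max B 1 ^ d * d.choose (d / 2))
  refine (bUnion_roots_finite (algebraMap ℤ ℂ) d (Set.finite_Icc (-C : ℤ) C)).subset ?_
  rintro x ⟨hx, hdeg, hroots⟩
  have hmap : minpoly ℚ x = (minpoly ℤ x).map (algebraMap ℤ ℚ) :=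
    minpoly.isIntegrallyClosed_eq_field_fractions' ℚ hx
  simp_rw [Set.mem_iUnion]
  refine ⟨minpoly ℤ x, ⟨?_, fun i => ?_⟩, mem_rootSet.2 ⟨minpoly.ne_zero hx, minpoly.aeval ℤ x⟩⟩
  · rwa [← (minpoly.monic hx).natDegree_map (algebraMap ℤ ℚ), ← hmap]
  rw [Set.mem_Icc, ← abs_le, ← @Int.cast_le ℝ]
  have hcoeff := coeff_bdd_of_roots_le (algebraMap ℚ ℂ) (minpoly.monic hx.tower_top)
    (IsAlgClosed.splits _) hdeg hroots i
  refine (Eq.trans_le ?_ hcoeff).trans (Nat.le_ceil _)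
  rw [hmap, coeff_map, coeff_map, eq_intCast, map_intCast, Complex.norm_intCast, Int.cast_abs]

open scoped Topology in
theorem Set.Finite.exists_pos_forall_add_le {s : Set ℝ} (hs : s.Finite) {a : ℝ}
    (h : ∀ x ∈ s, a < x) : ∃ ε > 0, ∀ x ∈ s, a + ε ≤ x := by
  have : ∀ᶠ ε in 𝓝[>] (0 : ℝ), ∀ x ∈ s, a + ε ≤ x :=
    (Filter.eventually_all_finite hs).2 fun x hx =>
      ((eventually_le_nhds (sub_pos.2 (h x hx))).filter_mono nhdsWithin_le_nhds).mono
        fun ε hε => by linarith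
  obtain ⟨ε, hε, hpos⟩ := (this.and self_mem_nhdsWithin).exists
  exact ⟨ε, hpos, hε⟩

namespace IsComplexSalem

theorem isIntegral {lam : ℂ} (h : IsComplexSalem lam) : IsIntegral ℤ lam := by
  obtain ⟨-, p, hmonic, hp, -⟩ := h
  exact ⟨p, hmonic, by rwa [← aeval_def]⟩

theorem norm_le_of_mem_aroots_minpoly {lam z : ℂ} (h : IsComplexSalem lam)
    (hz : z ∈ (minpoly ℚ lam).aroots ℂ) : ‖z‖ ≤ ‖lam‖ := by
  obtain ⟨hgt, p, -, hp, hroots⟩ := h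
  have hpz : aeval z p = 0 := by
    rw [← aeval_map_algebraMap ℚ] at hp ⊢
    exact aeval_eq_zero_of_dvd_aeval_eq_zero (minpoly.dvd ℚ lam hp) (mem_aroots.1 hz).2
  have hinv : ‖lam‖⁻¹ ≤ ‖lam‖ := (inv_lt_one_of_one_lt₀ hgt).le.trans hgt.le
  rcases hroots z hpz with rfl | rfl | rfl | rfl | hz1
  · exact le_rfl
  · simp
  · simpa using hinv
  · simpa using hinv
  · exact hz1 ▸ hgt.le

end IsComplexSalem

/-- For any fixed `d`, the complex Salem numbers of degree at most `d`
over `ℚ` are uniformly bounded away from `1` in absolute value: there is `ε > 0`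
with `|λ| ≥ 1 + ε` for all such `λ`. -/
theorem complexSalem_bounded_away_from_one (d : ℕ) :
    ∃ ε : ℝ, 0 < ε ∧ ∀ lam : ℂ, IsComplexSalem lam →
      (minpoly ℚ lam).natDegree ≤ d → 1 + ε ≤ ‖lam‖ := by
  let S := {lam : ℂ | IsComplexSalem lam ∧ (minpoly ℚ lam).natDegree ≤ d ∧ ‖lam‖ ≤ 2}
  have hS : S.Finite :=
    (finite_setOf_isIntegral_natDegree_minpoly_le_of_aroots_norm_le d 2).subset
      fun lam ⟨hsalem, hdeg, hle⟩ => ⟨hsalem.isIntegral, hdeg,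
        fun z hz => (hsalem.norm_le_of_mem_aroots_minpoly hz).trans hle⟩
  -- `2` is added so that `1 + ε ≤ 2` also covers the Salem numbers with `‖λ‖ > 2`.
  obtain ⟨ε, hε, hle⟩ := ((hS.image (‖·‖)).insert 2).exists_pos_forall_add_le <| by
    rintro _ (rfl | ⟨lam, ⟨hsalem, -⟩, rfl⟩)
    exacts [one_lt_two, hsalem.1]
  refine ⟨ε, hε, fun lam hsalem hdeg => ?_⟩
  by_cases h2 : ‖lam‖ ≤ 2
  · exact hle _ (Or.inr ⟨lam, ⟨hsalem, hdeg, h2⟩, rfl⟩)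
  · linarith [hle 2 (Or.inl rfl)]
end

section
/- Let p₁(z) be a monic irreducible polynomial over the ring of integers of a number field K ⊂ ℝ (viewed inside ℂ via embeddings of a CM extension), having a root μ with |μ| ≠ 1 and such that the constant term of p₁ equals w·μ for some complex number w with |w| = 1. If the constant term lies in O_K and there exists a real embedding σ ≠ id of K under which all roots of the corresponding conjugate polynomial lie on the unit circle, then |σ(constant term)| = 1 forces a contradiction; i.e., the constant term cannot lie in O_K unless |μ| = 1. -/
open Polynomial

/-!
The constant term of the monic polynomial `p₁^σ` is, up to sign, the product of its roots, so it
has absolute value `1`. Since `σ` is a real embedding, `σ (p₁.coeff 0) = ±1`, hence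
`p₁.coeff 0 = ±1` and its image `w * μ` under `σ₀` also has absolute value `1`, i.e. `‖μ‖ = 1`.
-/

theorem Polynomial.Monic.norm_coeff_zero_eq_one {k : Type*} [NormedField k] [IsAlgClosed k]
    {P : k[X]} (hP : P.Monic) (hroots : ∀ z, P.IsRoot z → ‖z‖ = 1) : ‖P.coeff 0‖ = 1 := by
  rw [(IsAlgClosed.splits P).coeff_zero_eq_prod_roots_of_monic hP, norm_mul, norm_pow, norm_neg,
    norm_one, one_pow, one_mul]
  change normHom P.roots.prod = 1
  rw [map_multiset_prod]
  exact Multiset.prod_eq_one fun r hr ↦ by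
    obtain ⟨z, hz, rfl⟩ := Multiset.mem_map.mp hr
    exact hroots z (mem_roots'.mp hz).2

theorem RingHom.eq_one_or_eq_neg_one_of_abs_eq_one {K : Type*} [DivisionRing K] (σ : K →+* ℝ)
    {x : K} (h : |σ x| = 1) : x = 1 ∨ x = -1 := by
  rcases (abs_eq zero_le_one).mp h with h | h
  · exact Or.inl (σ.injective (by rw [h, map_one]))
  · exact Or.inr (σ.injective (by rw [h, map_neg, map_one]))

theorem RingHom.abs_apply_eq_one_of_abs_apply_eq_one {K : Type*} [DivisionRing K]
    (σ τ : K →+* ℝ) {x : K} (h : |σ x| = 1) : |τ x| = 1 := by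
  rcases σ.eq_one_or_eq_neg_one_of_abs_eq_one h with rfl | rfl <;> simp

theorem no_integral_constant_term_general (K : Type) [Field K] [NumberField K]
    (σ₀ σ : K →+* ℝ)
    (p₁ : Polynomial K) (hmonic : p₁.Monic)
    (μ w : ℂ) (hμ : ‖μ‖ ≠ 1) (hw : ‖w‖ = 1)
    (hconst : (Complex.ofRealHom.comp σ₀) (p₁.coeff 0) = w * μ)
    (hunit : ∀ z : ℂ, (p₁.map (Complex.ofRealHom.comp σ)).IsRoot z →
      ‖z‖ = 1) :
    False := by
  have hσ : |σ (p₁.coeff 0)| = 1 := by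
    simpa [coeff_map] using (hmonic.map (Complex.ofRealHom.comp σ)).norm_coeff_zero_eq_one hunit
  have hσ₀ : ‖(Complex.ofRealHom.comp σ₀) (p₁.coeff 0)‖ = 1 := by
    simpa using σ.abs_apply_eq_one_of_abs_apply_eq_one σ₀ hσ
  rw [hconst, norm_mul, hw, one_mul] at hσ₀
  exact hμ hσ₀

/-- Let `p₁` be a monic irreducible polynomial over a (real-embedded)
number field `K`, with algebraic-integer coefficients, having a root `μ` with
`|μ| ≠ 1`, whose constant term equals `w·μ` with `|w| = 1`. If there is a real
embedding `σ ≠ σ₀` under which all roots of the conjugate polynomial `p₁^σ` lie on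
the unit circle, we reach a contradiction: the constant term cannot lie in `𝓞 K`
unless `|μ| = 1`. -/
theorem no_integral_constant_term (K : Type) [Field K] [NumberField K]
    (σ₀ σ : K →+* ℝ) (hσ : σ ≠ σ₀)
    (p₁ : Polynomial K) (hmonic : p₁.Monic) (hirr : Irreducible p₁)
    -- the coefficients of p₁ lie in the ring of integers of K
    (hint : ∀ k, IsIntegral ℤ (p₁.coeff k))
    (μ w : ℂ) (hμ : ‖μ‖ ≠ 1) (hw : ‖w‖ = 1)
    (hroot : (p₁.map (Complex.ofRealHom.comp σ₀)).IsRoot μ)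
    (hconst : (Complex.ofRealHom.comp σ₀) (p₁.coeff 0) = w * μ)
    (hunit : ∀ z : ℂ, (p₁.map (Complex.ofRealHom.comp σ)).IsRoot z →
      ‖z‖ = 1) :
    False :=
  no_integral_constant_term_general K σ₀ σ p₁ hmonic μ w hμ hw hconst hunit
end
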